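/- With the structures as in the standard setup and θₐ := φₐφ - ξₐ⊗η, one has -θₐ(φξₐ₊₁) + η(ξₐ₊₁)φξₐ = ξₐ₊₂ = θₐ₊₁(φξₐ) - η(ξₐ)φξₐ₊₁ (indices mod 3). -/

import Mathlib

open RealInnerProductSpace

/-- Pointwise setup on a real inner product space: an almost contact metric
structure `(φ, ξ, η)` together with an almost contact metric 3-structure
`(φₐ, ξₐ, ηₐ)`, `a ∈ ZMod 3`, satisfying the quaternionic contact relations and
the compatibility relations coming from `JJₐ = JₐJ`.  Here `η x = ⟪x, ξ⟫` and
`ηₐ x = ⟪x, ξₐ⟫`. -/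
structure ContactSetup (V : Type*) [NormedAddCommGroup V] [InnerProductSpace ℝ V] where
  φ : V →ₗ[ℝ] V
  ξ : V
  φa : ZMod 3 → (V →ₗ[ℝ] V)
  ξa : ZMod 3 → V
  φ_sq : ∀ x, φ (φ x) = -x + ⟪x, ξ⟫ • ξ
  ξ_unit : ⟪ξ, ξ⟫ = 1
  φ_ξ : φ ξ = 0
  φ_metric : ∀ x y, ⟪φ x, φ y⟫ = ⟪x, y⟫ - ⟪x, ξ⟫ * ⟪y, ξ⟫
  φa_sq : ∀ a x, φa a (φa a x) = -x + ⟪x, ξa a⟫ • ξa a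
  ξa_unit : ∀ a, ⟪ξa a, ξa a⟫ = 1
  φa_ξa : ∀ a, φa a (ξa a) = 0
  φa_metric : ∀ a x y, ⟪φa a x, φa a y⟫ = ⟪x, y⟫ - ⟪x, ξa a⟫ * ⟪y, ξa a⟫
  quat₁ : ∀ a x, φa a (φa (a + 1) x) - ⟪x, ξa (a + 1)⟫ • ξa a = φa (a + 2) x
  quat₂ : ∀ a x, φa (a + 2) x = -(φa (a + 1) (φa a x)) + ⟪x, ξa a⟫ • ξa (a + 1)
  quat_ξ₁ : ∀ a, φa a (ξa (a + 1)) = ξa (a + 2)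
  quat_ξ₂ : ∀ a, ξa (a + 2) = -(φa (a + 1) (ξa a))
  inter : ∀ a x, φa a (φ x) - ⟪x, ξ⟫ • ξa a = φ (φa a x) - ⟪x, ξa a⟫ • ξ
  inter_ξ : ∀ a, φ (ξa a) = φa a ξ

/-- The local symmetric tensor `θₐ := φₐφ - ξₐ ⊗ η`. -/
def ContactSetup.θa {V : Type*} [NormedAddCommGroup V] [InnerProductSpace ℝ V]
    (S : ContactSetup V) (a : ZMod 3) (x : V) : V :=
  S.φa a (S.φ x) - ⟪x, S.ξ⟫ • S.ξa a

namespace ContactSetup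

variable {V : Type*} [NormedAddCommGroup V] [InnerProductSpace ℝ V] (S : ContactSetup V)

/-- Expanding `φ³x` in two ways (as `φ² (φ x)` and as `φ (φ² x)`) shows `η(φx) ξ = 0`. -/
theorem inner_φ_ξ (x : V) : ⟪S.φ x, S.ξ⟫ = 0 := by
  have hcube : S.φ (S.φ (S.φ x)) = -S.φ x := by
    rw [S.φ_sq x, map_add, map_neg, map_smul, S.φ_ξ, smul_zero, add_zero]
  have hsmul : ⟪S.φ x, S.ξ⟫ • S.ξ = 0 := by
    have h := S.φ_sq (S.φ x)
    rwa [hcube, left_eq_add] at h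
  simpa only [real_inner_smul_left, S.ξ_unit, mul_one, inner_zero_left] using
    congrArg (⟪·, S.ξ⟫) hsmul

theorem θa_φ (a : ZMod 3) (x : V) :
    S.θa a (S.φ x) = -S.φa a x + ⟪x, S.ξ⟫ • S.φ (S.ξa a) := by
  rw [θa, S.inner_φ_ξ, zero_smul, sub_zero, S.φ_sq, map_add, map_neg, map_smul, S.inter_ξ]

end ContactSetup

/-- `-θₐ(φξₐ₊₁) + η(ξₐ₊₁)φξₐ = ξₐ₊₂ = θₐ₊₁(φξₐ) - η(ξₐ)φξₐ₊₁`. -/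
theorem theta_a_phi_xi_a1 {V : Type*} [NormedAddCommGroup V] [InnerProductSpace ℝ V]
    (S : ContactSetup V) (a : ZMod 3) :
    -(S.θa a (S.φ (S.ξa (a + 1)))) + ⟪S.ξa (a + 1), S.ξ⟫ • S.φ (S.ξa a) = S.ξa (a + 2) ∧
    S.ξa (a + 2) = S.θa (a + 1) (S.φ (S.ξa a)) - ⟪S.ξa a, S.ξ⟫ • S.φ (S.ξa (a + 1)) := by
  constructor
  · rw [S.θa_φ, S.quat_ξ₁]
    abel
  · rw [S.θa_φ, S.quat_ξ₂]
    abel
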